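/- The implied vol I(y), defined implicitly by c_b(y, I(y)) = E[c_b(y + η(G-1), √G)], is continuously differentiable on ℝ with derivative I'(y) = [Φ(-y/I(y)) - E[Φ(-(y + η(G-1))/√G)]] / φ(-y/I(y)). -/

import Mathlib

open MeasureTheory ProbabilityTheory Real

noncomputable def normalPdf (x : ℝ) : ℝ := (Real.sqrt (2 * Real.pi))⁻¹ * Real.exp (-(x ^ 2) / 2)

noncomputable def normalCdf (x : ℝ) : ℝ := ∫ t in Set.Iic x, normalPdf t

noncomputable def cb (y σ : ℝ) : ℝ := -y * normalCdf (-y / σ) + σ * normalPdf (-y / σ)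

/-!
The right-hand side `h y = E[c_b(y + η(G-1), √G)]` is differentiable with `h' y = -E[Φ(...)]`,
by differentiating under the integral: the `y`-derivative of `c_b` is `-Φ`, bounded by `1`.
The implicit function theorem applied to `(y, σ) ↦ c_b(y, σ) - h y`, whose `σ`-derivative
`φ(-y/σ)` never vanishes, gives a differentiable local solution near `(y₀, I y₀)`; since
`σ ↦ c_b(y, σ)` is strictly increasing on `σ > 0`, that solution is `I` itself, with derivative
`-∂_y / ∂_σ`.
-/

open Filter Topology ContinuousLinearMap

theorem toSpanSingleton_comp_toSpanSingleton_inv {c : ℝ} (hc : c ≠ 0) :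
    toSpanSingleton ℝ c ∘L toSpanSingleton ℝ c⁻¹ = .id ℝ ℝ := by
  ext; simp [hc]

theorem toSpanSingleton_inv_comp_toSpanSingleton {c : ℝ} (hc : c ≠ 0) :
    toSpanSingleton ℝ c⁻¹ ∘L toSpanSingleton ℝ c = .id ℝ ℝ := by
  ext; simp [hc]

theorem continuousAt_uncurry_toSpanSingleton {f : ℝ → ℝ → ℝ} {u : ℝ × ℝ}
    (hf : ContinuousAt (Function.uncurry f) u) :
    ContinuousAt (Function.uncurry fun x y => toSpanSingleton ℝ (f x y)) u :=
  (toSpanSingletonLIE ℝ ℝ).continuous.continuousAt.comp hf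

/-- Injectivity of `f x` near `g x₀` identifies `g` with the implicit function, so no continuity
of `g` is needed. -/
theorem hasDerivAt_of_eventually_apply_eq_zero {f f₁ f₂ : ℝ → ℝ → ℝ} {g : ℝ → ℝ} {s : Set ℝ}
    {x₀ : ℝ} (hs : s ∈ 𝓝 (g x₀)) (hgs : ∀ᶠ x in 𝓝 x₀, g x ∈ s)
    (hinj : ∀ᶠ x in 𝓝 x₀, Set.InjOn (f x) s) (hfg : ∀ᶠ x in 𝓝 x₀, f x (g x) = 0)
    (df₁ : ∀ᶠ v in 𝓝 (x₀, g x₀), HasDerivAt (f · v.2) (f₁ v.1 v.2) v.1)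
    (df₂ : ∀ᶠ v in 𝓝 (x₀, g x₀), HasDerivAt (f v.1 ·) (f₂ v.1 v.2) v.2)
    (cf₁ : ContinuousAt ↿f₁ (x₀, g x₀)) (cf₂ : ContinuousAt ↿f₂ (x₀, g x₀))
    (hf₂ : f₂ x₀ (g x₀) ≠ 0) :
    HasDerivAt g (-(f₁ x₀ (g x₀) / f₂ x₀ (g x₀))) x₀ := by
  let F₁ : ℝ → ℝ → ℝ →L[ℝ] ℝ := fun x y => toSpanSingleton ℝ (f₁ x y)
  let F₂ : ℝ → ℝ → ℝ →L[ℝ] ℝ := fun x y => toSpanSingleton ℝ (f₂ x y)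
  have dF₁ : ∀ᶠ v in 𝓝 (x₀, g x₀), HasFDerivAt (f · v.2) (F₁ v.1 v.2) v.1 := df₁
  have dF₂ : ∀ᶠ v in 𝓝 (x₀, g x₀), HasFDerivAt (f v.1 ·) (F₂ v.1 v.2) v.2 := df₂
  have cF₁ : ContinuousAt ↿F₁ (x₀, g x₀) := continuousAt_uncurry_toSpanSingleton cf₁
  have cF₂ : ContinuousAt ↿F₂ (x₀, g x₀) := continuousAt_uncurry_toSpanSingleton cf₂
  have hinv : (F₂ x₀ (g x₀)).IsInvertible := .of_inverse
    (toSpanSingleton_comp_toSpanSingleton_inv hf₂) (toSpanSingleton_inv_comp_toSpanSingleton hf₂)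
  have hψ := (hasStrictFDerivAt_implicitFunctionOfBivariate dF₁ dF₂ cF₁ cF₂
    hinv).hasStrictDerivAt.hasDerivAt
  rw [inverse_eq (toSpanSingleton_comp_toSpanSingleton_inv hf₂)
    (toSpanSingleton_inv_comp_toSpanSingleton hf₂)] at hψ
  simp only [neg_apply, comp_apply, toSpanSingleton_apply, smul_eq_mul, one_mul,
    ← div_eq_mul_inv, F₁] at hψ
  refine hψ.congr_of_eventuallyEq ?_
  filter_upwards [tendsto_implicitFunctionOfBivariate dF₁ dF₂ cF₁ cF₂ hinv hs, hgs, hinj, hfg,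
    eventually_apply_implicitFunctionOfBivariate dF₁ dF₂ cF₁ cF₂ hinv]
    with x hψx hgx hinjx hfgx hfψx
  exact (hinjx hψx hgx (hfψx.trans (hfg.self_of_nhds.trans hfgx.symm))).symm

theorem normalPdf_eq_gaussianPDFReal : normalPdf = gaussianPDFReal 0 1 := by
  ext x
  simp [normalPdf, gaussianPDFReal]

theorem normalPdf_pos (x : ℝ) : 0 < normalPdf x := by
  rw [normalPdf_eq_gaussianPDFReal]
  exact gaussianPDFReal_pos _ _ _ one_ne_zero

theorem integrable_normalPdf : Integrable normalPdf := by
  rw [normalPdf_eq_gaussianPDFReal]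
  exact integrable_gaussianPDFReal _ _

theorem integral_normalPdf : ∫ x, normalPdf x = 1 := by
  rw [normalPdf_eq_gaussianPDFReal]
  exact integral_gaussianPDFReal_eq_one _ one_ne_zero

@[fun_prop]
theorem continuous_normalPdf : Continuous normalPdf := by
  unfold normalPdf
  fun_prop

theorem hasDerivAt_normalPdf (x : ℝ) : HasDerivAt normalPdf (-x * normalPdf x) x := by
  have h := (((hasDerivAt_pow 2 x).neg.div_const 2).exp).const_mul (√(2 * π))⁻¹
  exact h.congr_deriv (by simp only [normalPdf, Pi.neg_apply]; ring)

theorem hasDerivAt_normalCdf (x : ℝ) : HasDerivAt normalCdf (normalPdf x) x := by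
  have hsplit : normalCdf = fun u => normalCdf 0 + ∫ t in (0 : ℝ)..u, normalPdf t := by
    ext u
    rw [← intervalIntegral.integral_Iic_sub_Iic integrable_normalPdf.integrableOn
      integrable_normalPdf.integrableOn]
    simp only [normalCdf]
    ring
  rw [hsplit]
  exact (continuous_normalPdf.integral_hasStrictDerivAt 0 x).hasDerivAt.const_add _

@[fun_prop]
theorem continuous_normalCdf : Continuous normalCdf :=
  continuous_iff_continuousAt.2 fun x => (hasDerivAt_normalCdf x).continuousAt

theorem norm_normalCdf_le_one (x : ℝ) : ‖normalCdf x‖ ≤ 1 := by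
  have hnonneg : 0 ≤ normalCdf x := integral_nonneg fun t => (normalPdf_pos t).le
  rw [Real.norm_of_nonneg hnonneg, ← integral_normalPdf]
  exact setIntegral_le_integral integrable_normalPdf (ae_of_all _ fun t => (normalPdf_pos t).le)

/-- At `σ = 0` both sides degenerate consistently under `x / 0 = 0`. -/
theorem hasDerivAt_cb_fst (y σ : ℝ) : HasDerivAt (cb · σ) (-normalCdf (-y / σ)) y := by
  have hu : HasDerivAt (fun y => -y / σ) (-1 / σ) y := (hasDerivAt_neg y).div_const σ
  have h := ((hasDerivAt_neg y).mul ((hasDerivAt_normalCdf _).comp y hu)).add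
    (((hasDerivAt_normalPdf _).comp y hu).const_mul σ)
  refine h.congr_deriv ?_
  have hσ : σ⁻¹ * σ * σ⁻¹ = σ⁻¹ := by simpa using mul_inv_mul_cancel σ⁻¹
  simp only [Function.comp_apply]
  linear_combination (-y * normalPdf (-y / σ)) * hσ

theorem hasDerivAt_cb_snd {σ : ℝ} (y : ℝ) (hσ : σ ≠ 0) :
    HasDerivAt (cb y ·) (normalPdf (-y / σ)) σ := by
  have hu : HasDerivAt (fun σ => -y / σ) (y / σ ^ 2) σ := by
    simpa [div_eq_mul_inv] using (hasDerivAt_inv hσ).const_mul (-y)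
  have h := (((hasDerivAt_normalCdf _).comp σ hu).const_mul (-y)).add
    ((hasDerivAt_id σ).mul ((hasDerivAt_normalPdf _).comp σ hu))
  exact h.congr_deriv (by simp only [Function.comp_apply, id]; field_simp; ring)

theorem strictMonoOn_cb (y : ℝ) : StrictMonoOn (cb y) (Set.Ioi 0) := by
  refine strictMonoOn_of_hasDerivWithinAt_pos (convex_Ioi 0)
    (fun σ hσ => (hasDerivAt_cb_snd y (ne_of_gt hσ)).continuousAt.continuousWithinAt) ?_
    (fun σ _ => normalPdf_pos (-y / σ))
  rw [interior_Ioi]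
  exact fun σ hσ => (hasDerivAt_cb_snd y (ne_of_gt hσ)).hasDerivWithinAt

section Expectation

variable {Ω : Type*} [MeasurableSpace Ω] {μ : Measure Ω} [IsFiniteMeasure μ] {X S : Ω → ℝ}

theorem continuous_integral_normalCdf
    (hmeas : ∀ y, AEStronglyMeasurable (fun ω => normalCdf (-(y + X ω) / S ω)) μ) :
    Continuous fun y => ∫ ω, normalCdf (-(y + X ω) / S ω) ∂μ :=
  continuous_of_dominated hmeas (fun _ => ae_of_all _ fun _ => norm_normalCdf_le_one _)
    (integrable_const 1) (ae_of_all _ fun _ => by fun_prop)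

theorem hasDerivAt_integral_cb
    (hint : ∀ y, Integrable (fun ω => cb (y + X ω) (S ω)) μ)
    (hmeas : ∀ y, AEStronglyMeasurable (fun ω => normalCdf (-(y + X ω) / S ω)) μ) (y : ℝ) :
    HasDerivAt (fun y => ∫ ω, cb (y + X ω) (S ω) ∂μ)
      (-∫ ω, normalCdf (-(y + X ω) / S ω) ∂μ) y := by
  rw [← integral_neg]
  refine (hasDerivAt_integral_of_dominated_loc_of_deriv_le
    (F' := fun x ω => -normalCdf (-(x + X ω) / S ω)) (Metric.ball_mem_nhds y one_pos)
    (Eventually.of_forall fun y => (hint y).aestronglyMeasurable) (hint y) (hmeas y).neg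
    (ae_of_all _ fun _ _ _ => (norm_neg _).trans_le (norm_normalCdf_le_one _))
    (integrable_const 1) (ae_of_all _ fun ω x _ => ?_)).2
  exact (hasDerivAt_cb_fst _ _).comp_add_const x (X ω)

end Expectation

theorem implied_vol_C1_general {Ω : Type*} [MeasurableSpace Ω] (μ : Measure Ω)
    [IsProbabilityMeasure μ] (G : Ω → ℝ) (η : ℝ)
    (hint : ∀ y : ℝ,
      Integrable (fun ω => cb (y + η * (G ω - 1)) (Real.sqrt (G ω))) μ)
    (hintCdf : ∀ y : ℝ,
      Integrable (fun ω => normalCdf (-(y + η * (G ω - 1)) / Real.sqrt (G ω))) μ)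
    (I : ℝ → ℝ)
    (hIpos : ∀ y, 0 < I y)
    (hIeq : ∀ y,
      cb y (I y) = ∫ ω, cb (y + η * (G ω - 1)) (Real.sqrt (G ω)) ∂μ) :
    ContDiff ℝ 1 I ∧ ∀ y : ℝ,
      HasDerivAt I
        ((normalCdf (-y / I y) -
          ∫ ω, normalCdf (-(y + η * (G ω - 1)) / Real.sqrt (G ω)) ∂μ) /
          normalPdf (-y / I y)) y := by
  set m := fun y => ∫ ω, normalCdf (-(y + η * (G ω - 1)) / √(G ω)) ∂μ
  set h := fun y => ∫ ω, cb (y + η * (G ω - 1)) (√(G ω)) ∂μ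
  have hmeas (y : ℝ) := (hintCdf y).aestronglyMeasurable
  have hm : Continuous m := continuous_integral_normalCdf hmeas
  have hh (y : ℝ) : HasDerivAt h (-m y) y := hasDerivAt_integral_cb hint hmeas y
  have hderiv (y : ℝ) :
      HasDerivAt I ((normalCdf (-y / I y) - m y) / normalPdf (-y / I y)) y := by
    have hIy : I y ≠ 0 := (hIpos y).ne'
    refine (hasDerivAt_of_eventually_apply_eq_zero (f := fun y σ => cb y σ - h y)
      (f₁ := fun y σ => -normalCdf (-y / σ) + m y) (f₂ := fun y σ => normalPdf (-y / σ))
      (Ioi_mem_nhds (hIpos y)) (.of_forall hIpos) (.of_forall fun x => ?inj)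
      (.of_forall fun x => sub_eq_zero.2 (hIeq x)) (.of_forall fun v => ?df₁) ?df₂ ?cf₁ ?cf₂
      (normalPdf_pos _).ne').congr_deriv (by ring)
    case inj => exact fun a ha b hb hab => (strictMonoOn_cb x).injOn ha hb (sub_left_inj.1 hab)
    case df₁ => exact ((hasDerivAt_cb_fst _ _).sub (hh v.1)).congr_deriv (sub_neg_eq_add _ _)
    case df₂ =>
      filter_upwards [continuousAt_snd.eventually_ne hIy] with v hv
      exact (hasDerivAt_cb_snd v.1 hv).sub_const _
    case cf₁ => fun_prop (disch := exact hIy)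
    case cf₂ => fun_prop (disch := exact hIy)
  have hI : Continuous I := continuous_iff_continuousAt.2 fun y => (hderiv y).continuousAt
  refine ⟨contDiff_one_iff_deriv.2 ⟨fun y => (hderiv y).differentiableAt, ?_⟩, hderiv⟩
  rw [funext fun y => (hderiv y).deriv]
  have hσ : Continuous fun y => -y / I y := continuous_neg.div hI fun y => (hIpos y).ne'
  exact ((continuous_normalCdf.comp hσ).sub hm).div (continuous_normalPdf.comp hσ)
    fun y => (normalPdf_pos _).ne'

theorem implied_vol_C1 {Ω : Type*} [MeasurableSpace Ω] (μ : Measure Ω)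
    [IsProbabilityMeasure μ] (G : Ω → ℝ) (η : ℝ)
    (hpos : ∀ᵐ ω ∂μ, 0 < G ω) (hG : Integrable G μ)
    (hmean : ∫ ω, G ω ∂μ = 1)
    (hint : ∀ y : ℝ,
      Integrable (fun ω => cb (y + η * (G ω - 1)) (Real.sqrt (G ω))) μ)
    (hintCdf : ∀ y : ℝ,
      Integrable (fun ω => normalCdf (-(y + η * (G ω - 1)) / Real.sqrt (G ω))) μ)
    (I : ℝ → ℝ)
    (hIpos : ∀ y, 0 < I y)
    (hIeq : ∀ y,
      cb y (I y) = ∫ ω, cb (y + η * (G ω - 1)) (Real.sqrt (G ω)) ∂μ) :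
    ContDiff ℝ 1 I ∧ ∀ y : ℝ,
      HasDerivAt I
        ((normalCdf (-y / I y) -
          ∫ ω, normalCdf (-(y + η * (G ω - 1)) / Real.sqrt (G ω)) ∂μ) /
          normalPdf (-y / I y)) y :=
  implied_vol_C1_general μ G η hint hintCdf I hIpos hIeq
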